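/- For n ≥ k ≥ 1, the Stirling number S(n,k) is odd if and only if #([n] ∩ [n-k]) = σ(n) - σ(k) and ν(S(n,k)) = σ(k) - σ(n) + #([n] ∩ [n-k]). -/

import Mathlib

/-- Stirling numbers of the second kind. -/
def stirling2 : ℕ → ℕ → ℕ
  | 0, 0 => 1
  | 0, _ + 1 => 0
  | _ + 1, 0 => 0
  | n + 1, k + 1 => (k + 1) * stirling2 n (k + 1) + stirling2 n k

/-- Sum of base-2 digits. -/
def sigma2 (n : ℕ) : ℕ := (Nat.digits 2 n).sum

/-- The set of powers of 2 appearing in the binary expansion of `n`. -/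
def twoPows (n : ℕ) : Finset ℕ := (Nat.bitIndices n).toFinset.image (2 ^ ·)

/-! Reducing the recurrence modulo `2` gives `S(a + k, k) ≡ C(a + ⌊(k-1)/2⌋, a)`, and by Lucas'
theorem this binomial coefficient is odd exactly when `a` and `⌊(k-1)/2⌋` have no binary digit in
common. Writing `n = a + k`, the set `[n] ∩ [n-k]` is the binary support of the bitwise `n ∧ a`,
and under that disjointness condition a binary induction on `a` gives `σ(n) = σ(k) + σ(n ∧ a)`.
For odd `S(n, k)` the valuation is `0`, which is the second equation; conversely the two equations
force `ν(S(n, k)) = 0`, and `S(n, k) > 0` for `1 ≤ k ≤ n`. -/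

theorem Nat.bit_add_bit (r s : Bool) (x y : ℕ) :
    Nat.bit r x + Nat.bit s y = Nat.bit (r ^^ s) (x + y + (r && s).toNat) := by
  cases r <;> cases s <;> simp [Nat.bit_val] <;> omega

theorem sigma2_bit (b : Bool) (n : ℕ) : sigma2 (Nat.bit b n) = sigma2 n + b.toNat := by
  rcases Nat.eq_zero_or_pos (Nat.bit b n) with h | h
  · obtain ⟨rfl, rfl⟩ := Nat.bit_eq_zero_iff.mp h
    rfl
  · rw [sigma2, Nat.digits_def' one_lt_two h, Nat.bit_mod_two, Nat.bit_div_two, List.sum_cons,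
      sigma2, add_comm]

theorem odd_choose_add_iff (x y : ℕ) : Odd ((x + y).choose x) ↔ x &&& y = 0 := by
  induction x using Nat.binaryRec generalizing y with
  | zero => simp
  | bit r x ih =>
    obtain ⟨s, y, rfl⟩ : ∃ s y', Nat.bit s y' = y :=
      ⟨_, _, Nat.bit_testBit_zero_shiftRight_one y⟩
    have lucas := Choose.choose_modEq_choose_mod_mul_choose_div_nat (p := 2)
      (n := Nat.bit r x + Nat.bit s y) (k := Nat.bit r x)
    rw [Nat.odd_iff, lucas, Nat.bit_add_bit, Nat.bit_mod_two, Nat.bit_div_two, Nat.bit_mod_two,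
      Nat.bit_div_two, Nat.land_bit, Nat.bit_eq_zero_iff, ← Nat.odd_iff, ← ih]
    cases r <;> cases s <;> simp

theorem stirling2_succ_succ (n k : ℕ) :
    stirling2 (n + 1) (k + 1) = (k + 1) * stirling2 n (k + 1) + stirling2 n k := rfl

theorem stirling2_eq_stirlingSecond : stirling2 = Nat.stirlingSecond := by
  funext n k
  induction n generalizing k with
  | zero => cases k <;> rfl
  | succ n ih => cases k <;> simp [stirling2, Nat.stirlingSecond_succ_succ, ih]

theorem stirling2_pos {n k : ℕ} (hk : 1 ≤ k) (hkn : k ≤ n) : 0 < stirling2 n k := by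
  induction n generalizing k with
  | zero => omega
  | succ n ih =>
    obtain ⟨j, rfl⟩ : ∃ j, k = j + 1 := ⟨k - 1, by omega⟩
    rcases Nat.eq_zero_or_pos j with rfl | hj
    · simp [stirling2_eq_stirlingSecond, Nat.stirlingSecond_one_right]
    · exact Nat.add_pos_right _ (ih hj (by omega))

theorem stirling2_succ_even_zmod_two (n w : ℕ) :
    (stirling2 (n + 1) (2 * w + 2) : ZMod 2) = stirling2 n (2 * w + 1) := by
  rw [show 2 * w + 2 = 2 * w + 1 + 1 from rfl, stirling2_succ_succ, Nat.cast_add, Nat.cast_mul,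
    Even.natCast_zmod_two ⟨w + 1, by ring⟩, zero_mul, zero_add]

theorem stirling2_add_odd_zmod_two : ∀ a w : ℕ,
    (stirling2 (a + (2 * w + 1)) (2 * w + 1) : ZMod 2) = ((a + w).choose a : ZMod 2)
  | 0, w => by simp [stirling2_eq_stirlingSecond, Nat.stirlingSecond_self]
  | a + 1, 0 => by simp [stirling2_eq_stirlingSecond, Nat.stirlingSecond_one_right]
  | a + 1, w + 1 => by
    have h2 : (2 : ZMod 2) = 0 := rfl
    calc (stirling2 (a + 1 + (2 * (w + 1) + 1)) (2 * (w + 1) + 1) : ZMod 2)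
        = (2 * (w + 1) + 1) * stirling2 (a + (2 * (w + 1) + 1)) (2 * (w + 1) + 1)
            + stirling2 (a + 1 + (2 * w + 1) + 1) (2 * w + 2) := by
          rw [show a + 1 + (2 * (w + 1) + 1) = a + (2 * (w + 1) + 1) + 1 by ring,
            show 2 * (w + 1) + 1 = 2 * w + 2 + 1 by ring, stirling2_succ_succ]
          push_cast
          ring_nf
      _ = (a + (w + 1)).choose a + (a + 1 + w).choose (a + 1) := by
          rw [stirling2_add_odd_zmod_two a (w + 1), stirling2_succ_even_zmod_two,
            stirling2_add_odd_zmod_two (a + 1) w, h2]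
          ring
      _ = (a + 1 + (w + 1)).choose (a + 1) := by
          rw [show a + 1 + (w + 1) = a + (w + 1) + 1 by ring, Nat.choose_succ_succ,
            show a + (w + 1) = a + 1 + w by ring]
          push_cast
          ring

theorem stirling2_add_self_zmod_two {a k : ℕ} (hk : 1 ≤ k) :
    (stirling2 (a + k) k : ZMod 2) = ((a + (k - 1) / 2).choose a : ZMod 2) := by
  obtain ⟨w, rfl | rfl⟩ : ∃ w, k = 2 * w + 1 ∨ k = 2 * w + 2 := ⟨(k - 1) / 2, by omega⟩
  · rw [show (2 * w + 1 - 1) / 2 = w by omega, stirling2_add_odd_zmod_two]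
  · rw [show (2 * w + 2 - 1) / 2 = w by omega, show a + (2 * w + 2) = a + (2 * w + 1) + 1 by ring,
      stirling2_succ_even_zmod_two, stirling2_add_odd_zmod_two]

theorem odd_stirling2_add_self_iff {a k : ℕ} (hk : 1 ≤ k) :
    Odd (stirling2 (a + k) k) ↔ a &&& ((k - 1) / 2) = 0 := by
  rw [← ZMod.natCast_eq_one_iff_odd, stirling2_add_self_zmod_two hk,
    ZMod.natCast_eq_one_iff_odd, odd_choose_add_iff]

/-- The first disjunct is the form the induction reproduces after a step with `k` odd; the second
is the one produced by the parity of `S(n, k)`. -/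
theorem sigma2_add_eq_of_land_half_eq_zero {a k : ℕ}
    (h : a &&& (k / 2) = 0 ∨ a &&& ((k - 1) / 2) = 0) :
    sigma2 (a + k) = sigma2 k + sigma2 ((a + k) &&& a) := by
  induction a using Nat.binaryRec generalizing k with
  | zero => simp [sigma2]
  | bit r a ih =>
    obtain ⟨s, k, rfl⟩ : ∃ s k', Nat.bit s k' = k :=
      ⟨_, _, Nat.bit_testBit_zero_shiftRight_one k⟩
    have halve (m : ℕ) (hm : Nat.bit r a &&& m = 0) : a &&& (m / 2) = 0 := by
      rw [← Nat.bit_div_two r a, ← Nat.and_div_two, hm]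
    cases s
    · have hk : a &&& (k / 2) = 0 ∨ a &&& ((k - 1) / 2) = 0 := by
        refine h.imp (fun h => ?_) (fun h => ?_)
        · simpa [Nat.bit_div_two] using halve _ h
        · simpa [Nat.bit_val, show (2 * k - 1) / 2 / 2 = (k - 1) / 2 by omega] using halve _ h
      simp only [Nat.bit_add_bit, Nat.land_bit, Bool.and_false, Bool.xor_false, Bool.and_self,
        Bool.toNat_false, add_zero, sigma2_bit, ih hk]
      ring
    · have hk : Nat.bit r a &&& k = 0 := by
        rcases h with h | h <;> simpa [Nat.bit_div_two, Nat.bit_val, Nat.add_div] using h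
      cases r
      · simp only [Nat.bit_add_bit, Nat.land_bit, Bool.and_false, Bool.false_and, Bool.xor_true,
          Bool.not_false, Bool.toNat_false, Bool.toNat_true, add_zero, sigma2_bit,
          ih (Or.inl (halve k hk))]
        ring
      · obtain ⟨k, rfl⟩ : ∃ k', Nat.bit false k' = k := by
          have hk0 : k.testBit 0 = false := by
            simpa using congrArg (Nat.testBit · 0) hk
          exact ⟨k >>> 1, hk0 ▸ Nat.bit_testBit_zero_shiftRight_one k⟩
        have hcarry : a + Nat.bit false k + 1 = a + Nat.bit true k := rfl
        have ih' := ih (k := Nat.bit true k) (Or.inl (by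
          rw [Nat.bit_div_two, ← Nat.bit_div_two false k]; exact halve _ hk))
        simp only [Nat.bit_add_bit, Nat.land_bit, Bool.xor_self, Bool.and_self, Bool.toNat_true,
          Bool.false_and, hcarry, sigma2_bit, ih', Bool.toNat_false]
        ring

theorem length_bitIndices (n : ℕ) : n.bitIndices.length = sigma2 n := by
  induction n using Nat.binaryRec with
  | zero => rfl
  | bit b n ih =>
    cases b
    · rw [Nat.bitIndices_bit_false, sigma2_bit, List.length_map, ih]; rfl
    · rw [Nat.bitIndices_bit_true, sigma2_bit, List.length_cons, List.length_map, ih]; rfl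

theorem card_twoPows (n : ℕ) : (twoPows n).card = sigma2 n := by
  rw [twoPows, Finset.card_image_of_injective _ (Nat.pow_right_injective le_rfl),
    List.toFinset_card_of_nodup Nat.bitIndices_nodup, length_bitIndices]

theorem twoPows_inter_twoPows (m n : ℕ) : twoPows m ∩ twoPows n = twoPows (m &&& n) := by
  rw [twoPows, twoPows, twoPows, ← Finset.image_inter _ _ (Nat.pow_right_injective le_rfl)]
  congr 1
  ext i
  simp [Nat.testBit_and]

theorem card_twoPows_inter_twoPows (m n : ℕ) :
    (twoPows m ∩ twoPows n).card = sigma2 (m &&& n) := by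
  rw [twoPows_inter_twoPows, card_twoPows]

theorem stmt_18 (n k : ℕ) (hk : 1 ≤ k) (hkn : k ≤ n) :
    Odd (stirling2 n k) ↔
      ((twoPows n ∩ twoPows (n - k)).card : ℤ) = (sigma2 n : ℤ) - sigma2 k ∧
        (padicValNat 2 (stirling2 n k) : ℤ) =
          (sigma2 k : ℤ) - sigma2 n + (twoPows n ∩ twoPows (n - k)).card := by
  obtain ⟨a, rfl⟩ : ∃ a, n = a + k := ⟨n - k, by omega⟩
  rw [Nat.add_sub_cancel, card_twoPows_inter_twoPows]
  constructor
  · intro hodd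
    have hsigma := sigma2_add_eq_of_land_half_eq_zero
      (Or.inr ((odd_stirling2_add_self_iff hk).mp hodd))
    have hval := padicValNat.eq_zero_of_not_dvd hodd.not_two_dvd_nat
    omega
  · rintro ⟨hcard, hval⟩
    have hzero : padicValNat 2 (stirling2 (a + k) k) = 0 := by omega
    have hpos := stirling2_pos hk (Nat.le_add_left k a)
    rw [padicValNat.eq_zero_iff] at hzero
    rw [Nat.odd_iff]
    omega
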